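/- (Finitely additive Yan theorem, (iii) ⇒ (i)) Let A be an algebra over Ω, λ ∈ ba(A)₊, K ⊆ L¹(λ) convex with 0 ∈ K, and C = K − Sim(A)₊. Suppose there exists a finitely additive probability P on A with K ⊆ L¹(P), sup_{k∈K} P(k) < ∞, sup{P(A)/λ(A) : λ(A) > 0} < ∞, and P(A) = 0 ⟺ λ(A) = 0 for A ∈ A. Then for every f ∈ L¹(λ) with f ≥ 0 and ∫ f dλ > 0, there exists η > 0 such that η·f does not belong to the L¹(λ)-closure of C. -/

import Mathlib

open Set Filter Topology

variable {Ω : Type*}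

/-- `𝒜` is an algebra of subsets of `Ω`. -/
def IsAlg (𝒜 : Set (Set Ω)) : Prop :=
  ∅ ∈ 𝒜 ∧ Set.univ ∈ 𝒜 ∧ (∀ A ∈ 𝒜, Aᶜ ∈ 𝒜) ∧ ∀ A ∈ 𝒜, ∀ B ∈ 𝒜, A ∪ B ∈ 𝒜

/-- bounded finitely additive set function (element of ba(𝒜)). -/
def IsFinAdd (𝒜 : Set (Set Ω)) (μ : Set Ω → ℝ) : Prop :=
  μ ∅ = 0 ∧
  (∀ A ∈ 𝒜, ∀ B ∈ 𝒜, Disjoint A B → μ (A ∪ B) = μ A + μ B) ∧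
  ∃ C : ℝ, ∀ A ∈ 𝒜, |μ A| ≤ C

def IsPos (𝒜 : Set (Set Ω)) (μ : Set Ω → ℝ) : Prop := ∀ A ∈ 𝒜, 0 ≤ μ A

def IsCtblAdd (𝒜 : Set (Set Ω)) (μ : Set Ω → ℝ) : Prop :=
  ∀ A : ℕ → Set Ω, (∀ n, A n ∈ 𝒜) → Pairwise (Function.onFun Disjoint A) →
    (⋃ n, A n) ∈ 𝒜 → HasSum (fun n => μ (A n)) (μ (⋃ n, A n))

/-- total variation of `μ` on `A`. -/
noncomputable def tv (𝒜 : Set (Set Ω)) (μ : Set Ω → ℝ) (A : Set Ω) : ℝ :=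
  sSup {x | ∃ B ∈ 𝒜, B ⊆ A ∧ x = μ B - μ (A \ B)}

noncomputable def tvNorm (𝒜 : Set (Set Ω)) (μ : Set Ω → ℝ) : ℝ := tv 𝒜 μ Set.univ

/-- `ν ≪ μ`, absolute continuity in the ε-δ sense. -/
def AC (𝒜 : Set (Set Ω)) (ν μ : Set Ω → ℝ) : Prop :=
  ∀ ε > (0:ℝ), ∃ δ > (0:ℝ), ∀ E ∈ 𝒜, tv 𝒜 μ E < δ → tv 𝒜 ν E < ε

/-- `μ ⊥ ν`, singularity in the ε sense. -/
def Sing (𝒜 : Set (Set Ω)) (μ ν : Set Ω → ℝ) : Prop :=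
  ∀ ε > (0:ℝ), ∃ B ∈ 𝒜, tv 𝒜 μ Bᶜ + tv 𝒜 ν B < ε

/-- normalized total variation `|μ|/(1 ∨ ‖μ‖)`. -/
noncomputable def nvar (𝒜 : Set (Set Ω)) (μ : Set Ω → ℝ) (A : Set Ω) : ℝ :=
  tv 𝒜 μ A / (1 ⊔ tvNorm 𝒜 μ)

/-- membership in `𝐀(M)`: countable convex combinations of normalized variations. -/
def MemAM (𝒜 : Set (Set Ω)) (M : Set (Set Ω → ℝ)) (m : Set Ω → ℝ) : Prop :=
  ∃ (μ : ℕ → Set Ω → ℝ) (α : ℕ → ℝ),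
    (∀ n, μ n ∈ M) ∧ (∀ n, 0 ≤ α n) ∧ HasSum α 1 ∧
    ∀ A : Set Ω, m A = ∑' n, α n * nvar 𝒜 (μ n) A

/-- membership in `𝐋(M)`. -/
def MemLM (𝒜 : Set (Set Ω)) (M : Set (Set Ω → ℝ)) (ν : Set Ω → ℝ) : Prop :=
  ∃ m, MemAM 𝒜 M m ∧ AC 𝒜 ν m

/-- order on ba(𝒜). -/
def baLE (𝒜 : Set (Set Ω)) (μ ν : Set Ω → ℝ) : Prop := ∀ A ∈ 𝒜, μ A ≤ ν A

/-- λ-completion of 𝒜. -/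
def Completion (𝒜 : Set (Set Ω)) (l : Set Ω → ℝ) : Set (Set Ω) :=
  {B | ∀ ε > (0:ℝ), ∃ A ∈ 𝒜, ∃ A' ∈ 𝒜, A ⊆ B ∧ B ⊆ A' ∧ l (A' \ A) < ε}

/-- the extension `λ̄` to the completion. -/
noncomputable def extOf (𝒜 : Set (Set Ω)) (l : Set Ω → ℝ) (B : Set Ω) : ℝ :=
  sSup {x | ∃ A ∈ 𝒜, A ⊆ B ∧ x = l A}

/-- λ-atom. -/
def IsLAtom (𝒜 : Set (Set Ω)) (l : Set Ω → ℝ) (B : Set Ω) : Prop :=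
  B ∈ 𝒜 ∧ 0 < l B ∧ ∀ A ∈ 𝒜, A ⊆ B → l A = 0 ∨ l (B \ A) = 0

/-- simple 𝒜-measurable function. -/
def IsSimple (𝒜 : Set (Set Ω)) (f : Ω → ℝ) : Prop :=
  (Set.range f).Finite ∧ ∀ c : ℝ, f ⁻¹' {c} ∈ 𝒜

/-- integral of a simple function. -/
noncomputable def simpleInt (μ : Set Ω → ℝ) (f : Ω → ℝ) : ℝ :=
  ∑ᶠ c : ℝ, c * μ (f ⁻¹' {c})

/-- outer measure associated with l on 𝒜. -/
noncomputable def outerOf (𝒜 : Set (Set Ω)) (l : Set Ω → ℝ) (S : Set Ω) : ℝ :=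
  sInf {x | ∃ A ∈ 𝒜, S ⊆ A ∧ x = l A}

/-- Dunford–Schwartz approximating sequence for `f`. -/
def ApproxSeq (𝒜 : Set (Set Ω)) (l : Set Ω → ℝ) (f : Ω → ℝ) (g : ℕ → Ω → ℝ) : Prop :=
  (∀ n, IsSimple 𝒜 (g n)) ∧
  (∀ ε > (0:ℝ), ∃ N, ∀ p ≥ N, ∀ q ≥ N, simpleInt l (fun x => |g p x - g q x|) < ε) ∧
  (∀ ε > (0:ℝ), Tendsto (fun n => outerOf 𝒜 l {x | ε ≤ |g n x - f x|}) atTop (nhds 0))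

/-- membership in L¹(l). -/
def MemL1 (𝒜 : Set (Set Ω)) (l : Set Ω → ℝ) (f : Ω → ℝ) : Prop :=
  ∃ g, ApproxSeq 𝒜 l f g

/-- the Dunford–Schwartz integral. -/
noncomputable def dsInt (𝒜 : Set (Set Ω)) (l : Set Ω → ℝ) (f : Ω → ℝ) : ℝ :=
  sInf {I | ∃ g, ApproxSeq 𝒜 l f g ∧ Tendsto (fun n => simpleInt l (g n)) atTop (nhds I)}

/-- L¹ seminorm distance. -/
noncomputable def l1dist (𝒜 : Set (Set Ω)) (l : Set Ω → ℝ) (f h : Ω → ℝ) : ℝ :=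
  dsInt 𝒜 l (fun x => |f x - h x|)

/-- membership in the L¹(l)-closure of a set C of functions. -/
def InL1Closure (𝒜 : Set (Set Ω)) (l : Set Ω → ℝ) (C : Set (Ω → ℝ)) (f : Ω → ℝ) : Prop :=
  ∀ ε > (0:ℝ), ∃ h ∈ C, l1dist 𝒜 l f h < ε

/-- the set C = K − Sim(𝒜)₊. -/
def ConeDiff (𝒜 : Set (Set Ω)) (K : Set (Ω → ℝ)) : Set (Ω → ℝ) :=
  {f | ∃ k ∈ K, ∃ s : Ω → ℝ, IsSimple 𝒜 s ∧ (∀ x, 0 ≤ s x) ∧ f = k - s}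

/-!
The two hypotheses on `P` give `P ≤ c • λ` on `𝒜` for some `c > 0`, so every λ-approximating
sequence of simple functions also approximates for `P`, and `∫ h dP ≤ c ∫ |h| dλ` for
`h ∈ L¹(λ)`. Since `∫ f dλ > 0`, `f ≥ δ` on a set `B` with `λ B > 0`, hence `P B > 0` and
`∫ f dP ≥ δ P B`. Choosing `η` with `η δ P B ≥ sup_K ∫ k dP + 1`, every `k - s ∈ C` satisfies
`∫ (η f - k + s) dP ≥ 1`, so `η f` stays at `L¹(λ)`-distance at least `1 / c` from `C`.

That the Dunford–Schwartz integral is well defined, linear and monotone rests on one estimate: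
if `g n` is `L¹`-Cauchy and converges in outer measure to `F ≤ 0`, then `lim ∫ g n ≤ 0`.
Below a small level `δ`, `g n` contributes at most `δ μ Ω`; the set where `g n ≥ δ` has small
outer measure, and there `g n` is within `∫ |g n - g N|` of a fixed, bounded `g N`.
-/

open MeasureTheory

variable {𝒜 : Set (Set Ω)} {μ ν : Set Ω → ℝ}

theorem IsAlg.isSetAlgebra (h : IsAlg 𝒜) : IsSetAlgebra 𝒜 :=
  ⟨h.1, fun _ hs => h.2.2.1 _ hs, fun _ _ hs ht => h.2.2.2 _ hs _ ht⟩

namespace IsFinAdd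

theorem apply_biUnion_finset (h𝒜 : IsSetAlgebra 𝒜) (hμ : IsFinAdd 𝒜 μ) {ι : Type*}
    {s : Finset ι} {A : ι → Set Ω} (hA : ∀ i ∈ s, A i ∈ 𝒜)
    (hd : (s : Set ι).PairwiseDisjoint A) : μ (⋃ i ∈ s, A i) = ∑ i ∈ s, μ (A i) :=
  addContent_biUnion_eq (m := h𝒜.isSetRing.addContent_of_union μ hμ.1
    fun hs ht hst => hμ.2.1 _ hs _ ht hst) h𝒜.isSetRing hA hd

theorem mono (h𝒜 : IsSetAlgebra 𝒜) (hμ : IsFinAdd 𝒜 μ) (hμ0 : IsPos 𝒜 μ) {A B : Set Ω}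
    (hA : A ∈ 𝒜) (hB : B ∈ 𝒜) (hAB : A ⊆ B) : μ A ≤ μ B := by
  have h := hμ.2.1 A hA (B \ A) (h𝒜.sdiff_mem hB hA) disjoint_sdiff_right
  rw [union_sdiff_cancel hAB] at h
  linarith [hμ0 _ (h𝒜.sdiff_mem hB hA)]

theorem apply_union_le (h𝒜 : IsSetAlgebra 𝒜) (hμ : IsFinAdd 𝒜 μ) (hμ0 : IsPos 𝒜 μ)
    {A B : Set Ω} (hA : A ∈ 𝒜) (hB : B ∈ 𝒜) : μ (A ∪ B) ≤ μ A + μ B := by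
  have h := hμ.2.1 A hA (B \ A) (h𝒜.sdiff_mem hB hA) disjoint_sdiff_right
  rw [union_sdiff_self] at h
  linarith [hμ.mono h𝒜 hμ0 (h𝒜.sdiff_mem hB hA) hB sdiff_subset]

end IsFinAdd

theorem preimage_comp_eq_biUnion {ι : Type*} {w : Ω → ι} (hw : (range w).Finite)
    (φ : ι → ℝ) (T : Set ℝ) [DecidablePred (· ∈ T)] :
    (φ ∘ w) ⁻¹' T = ⋃ p ∈ hw.toFinset.filter (φ · ∈ T), w ⁻¹' {p} := by
  ext x
  simp

theorem preimage_comp_mem (h𝒜 : IsSetAlgebra 𝒜) {ι : Type*} {w : Ω → ι}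
    (hw : (range w).Finite) (hwA : ∀ p, w ⁻¹' {p} ∈ 𝒜) (φ : ι → ℝ) (T : Set ℝ) :
    (φ ∘ w) ⁻¹' T ∈ 𝒜 := by
  classical
  rw [preimage_comp_eq_biUnion hw]
  exact h𝒜.biUnion_mem _ fun p _ => hwA p

theorem isSimple_comp (h𝒜 : IsSetAlgebra 𝒜) {ι : Type*} {w : Ω → ι}
    (hw : (range w).Finite) (hwA : ∀ p, w ⁻¹' {p} ∈ 𝒜) (φ : ι → ℝ) : IsSimple 𝒜 (φ ∘ w) :=
  ⟨(hw.image φ).subset (range_comp φ w).subset, fun c => preimage_comp_mem h𝒜 hw hwA φ {c}⟩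

theorem simpleInt_comp_eq_sum (h𝒜 : IsSetAlgebra 𝒜) (hμ : IsFinAdd 𝒜 μ) {ι : Type*}
    {w : Ω → ι} (hw : (range w).Finite) (hwA : ∀ p, w ⁻¹' {p} ∈ 𝒜) (φ : ι → ℝ) :
    simpleInt μ (φ ∘ w) = ∑ p ∈ hw.toFinset, φ p * μ (w ⁻¹' {p}) := by
  classical
  have hsupp : (Function.support fun c => c * μ ((φ ∘ w) ⁻¹' {c})) ⊆
      hw.toFinset.image φ := by
    intro c hc
    obtain ⟨x, hx⟩ : ((φ ∘ w) ⁻¹' {c}).Nonempty :=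
      nonempty_iff_ne_empty.2 fun he => hc (by simp only [he, hμ.1, mul_zero])
    exact Finset.mem_image.2 ⟨w x, by simp, hx⟩
  rw [simpleInt, finsum_eq_sum_of_support_subset _ hsupp,
    ← Finset.sum_fiberwise_of_maps_to fun p hp => Finset.mem_image_of_mem φ hp]
  refine Finset.sum_congr rfl fun c _ => ?_
  have hd : ∀ s : Finset ι, (s : Set ι).PairwiseDisjoint fun p => w ⁻¹' {p} :=
    fun _ p _ q _ hpq =>
      disjoint_left.2 fun x (hp : w x = p) (hq : w x = q) => hpq (hp.symm.trans hq)
  rw [preimage_comp_eq_biUnion hw, hμ.apply_biUnion_finset h𝒜 (fun p _ => hwA p) (hd _),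
    Finset.mul_sum]
  refine Finset.sum_congr (by ext; simp) fun p hp => ?_
  rw [(Finset.mem_filter.1 hp).2]

namespace IsSimple

variable {u v : Ω → ℝ}

theorem preimage_mem (h𝒜 : IsSetAlgebra 𝒜) (hu : IsSimple 𝒜 u) (T : Set ℝ) : u ⁻¹' T ∈ 𝒜 :=
  preimage_comp_mem h𝒜 hu.1 hu.2 id T

theorem map (h𝒜 : IsSetAlgebra 𝒜) (hu : IsSimple 𝒜 u) (φ : ℝ → ℝ) :
    IsSimple 𝒜 fun x => φ (u x) :=
  isSimple_comp h𝒜 hu.1 hu.2 φ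

theorem pair_finite (hu : IsSimple 𝒜 u) (hv : IsSimple 𝒜 v) :
    (range fun x => (u x, v x)).Finite :=
  (hu.1.prod hv.1).subset (range_subset_iff.2 fun x => ⟨⟨x, rfl⟩, ⟨x, rfl⟩⟩)

theorem pair_preimage_mem (h𝒜 : IsSetAlgebra 𝒜) (hu : IsSimple 𝒜 u) (hv : IsSimple 𝒜 v)
    (p : ℝ × ℝ) : (fun x => (u x, v x)) ⁻¹' {p} ∈ 𝒜 := by
  have : (fun x => (u x, v x)) ⁻¹' {p} = u ⁻¹' {p.1} ∩ v ⁻¹' {p.2} := by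
    ext; simp [Prod.ext_iff]
  exact this ▸ h𝒜.inter_mem (hu.2 _) (hv.2 _)

theorem map₂ (h𝒜 : IsSetAlgebra 𝒜) (hu : IsSimple 𝒜 u) (hv : IsSimple 𝒜 v)
    (op : ℝ → ℝ → ℝ) : IsSimple 𝒜 fun x => op (u x) (v x) :=
  isSimple_comp h𝒜 (hu.pair_finite hv) (hu.pair_preimage_mem h𝒜 hv) fun p => op p.1 p.2

theorem exists_le (hu : IsSimple 𝒜 u) : ∃ M > 0, ∀ x, u x ≤ M := by
  obtain ⟨M, hM⟩ := hu.1.bddAbove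
  exact ⟨max M 1, by positivity, fun x => (hM ⟨x, rfl⟩).trans (le_max_left _ _)⟩

end IsSimple

theorem isSimple_indicator (h𝒜 : IsSetAlgebra 𝒜) {B : Set Ω} (hB : B ∈ 𝒜) (c : ℝ) :
    IsSimple 𝒜 (B.indicator fun _ => c) := by
  refine ⟨(toFinite {c, 0}).subset ?_, fun b => ?_⟩
  · rintro _ ⟨x, rfl⟩
    by_cases hx : x ∈ B <;> simp [hx]
  · rcases indicator_const_preimage B {b} c with h | h | h | h <;> rw [h]
    exacts [h𝒜.univ_mem, hB, h𝒜.compl_mem hB, h𝒜.empty_mem]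

theorem isSimple_const (h𝒜 : IsSetAlgebra 𝒜) (c : ℝ) : IsSimple 𝒜 fun _ : Ω => c := by
  simpa using isSimple_indicator h𝒜 h𝒜.univ_mem c

section SimpleInt

variable {u v : Ω → ℝ}

theorem simpleInt_map_eq_sum (h𝒜 : IsSetAlgebra 𝒜) (hμ : IsFinAdd 𝒜 μ) (hu : IsSimple 𝒜 u)
    (φ : ℝ → ℝ) :
    simpleInt μ (fun x => φ (u x)) = ∑ a ∈ hu.1.toFinset, φ a * μ (u ⁻¹' {a}) :=
  simpleInt_comp_eq_sum h𝒜 hμ hu.1 hu.2 φ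

theorem simpleInt_map₂_eq_sum (h𝒜 : IsSetAlgebra 𝒜) (hμ : IsFinAdd 𝒜 μ) (hu : IsSimple 𝒜 u)
    (hv : IsSimple 𝒜 v) (op : ℝ → ℝ → ℝ) :
    simpleInt μ (fun x => op (u x) (v x)) = ∑ p ∈ (hu.pair_finite hv).toFinset,
      op p.1 p.2 * μ ((fun x => (u x, v x)) ⁻¹' {p}) :=
  simpleInt_comp_eq_sum h𝒜 hμ _ (hu.pair_preimage_mem h𝒜 hv) fun p => op p.1 p.2

theorem simpleInt_add (h𝒜 : IsSetAlgebra 𝒜) (hμ : IsFinAdd 𝒜 μ) (hu : IsSimple 𝒜 u)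
    (hv : IsSimple 𝒜 v) : simpleInt μ (fun x => u x + v x) = simpleInt μ u + simpleInt μ v := by
  rw [simpleInt_map₂_eq_sum h𝒜 hμ hu hv (· + ·), simpleInt_map₂_eq_sum h𝒜 hμ hu hv fun a _ => a,
    simpleInt_map₂_eq_sum h𝒜 hμ hu hv fun _ b => b, ← Finset.sum_add_distrib]
  simp only [add_mul]

theorem simpleInt_sub (h𝒜 : IsSetAlgebra 𝒜) (hμ : IsFinAdd 𝒜 μ) (hu : IsSimple 𝒜 u)
    (hv : IsSimple 𝒜 v) : simpleInt μ (fun x => u x - v x) = simpleInt μ u - simpleInt μ v := by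
  rw [simpleInt_map₂_eq_sum h𝒜 hμ hu hv (· - ·), simpleInt_map₂_eq_sum h𝒜 hμ hu hv fun a _ => a,
    simpleInt_map₂_eq_sum h𝒜 hμ hu hv fun _ b => b, ← Finset.sum_sub_distrib]
  simp only [sub_mul]

theorem simpleInt_const_mul (h𝒜 : IsSetAlgebra 𝒜) (hμ : IsFinAdd 𝒜 μ) (hu : IsSimple 𝒜 u)
    (c : ℝ) : simpleInt μ (fun x => c * u x) = c * simpleInt μ u := by
  rw [simpleInt_map_eq_sum h𝒜 hμ hu (c * ·), simpleInt_map_eq_sum h𝒜 hμ hu fun a => a,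
    Finset.mul_sum]
  simp only [mul_assoc]

theorem simpleInt_mono (h𝒜 : IsSetAlgebra 𝒜) (hμ : IsFinAdd 𝒜 μ) (hμ0 : IsPos 𝒜 μ)
    (hu : IsSimple 𝒜 u) (hv : IsSimple 𝒜 v) (huv : ∀ x, u x ≤ v x) :
    simpleInt μ u ≤ simpleInt μ v := by
  rw [simpleInt_map₂_eq_sum h𝒜 hμ hu hv fun a _ => a,
    simpleInt_map₂_eq_sum h𝒜 hμ hu hv fun _ b => b]
  refine Finset.sum_le_sum fun p hp =>
    mul_le_mul_of_nonneg_right ?_ (hμ0 _ (hu.pair_preimage_mem h𝒜 hv p))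
  obtain ⟨x, rfl⟩ := (hu.pair_finite hv).mem_toFinset.1 hp
  exact huv x

theorem simpleInt_indicator (hμ : IsFinAdd 𝒜 μ) (B : Set Ω) (c : ℝ) :
    simpleInt μ (B.indicator fun _ => c) = c * μ B := by
  classical
  rw [simpleInt, finsum_eq_single _ c fun b hb => ?_]
  · rcases eq_or_ne c 0 with rfl | hc
    · simp
    · simp [indicator_const_preimage_eq_union, hc.symm]
  · rcases eq_or_ne b 0 with rfl | hb0
    · simp
    · simp [indicator_const_preimage_eq_union, hb.symm, hb0.symm, hμ.1]

theorem simpleInt_const (hμ : IsFinAdd 𝒜 μ) (c : ℝ) :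
    simpleInt μ (fun _ : Ω => c) = c * μ univ := by
  simpa using simpleInt_indicator hμ univ c

theorem simpleInt_nonneg (h𝒜 : IsSetAlgebra 𝒜) (hμ : IsFinAdd 𝒜 μ) (hμ0 : IsPos 𝒜 μ)
    (hu : IsSimple 𝒜 u) (hu0 : ∀ x, 0 ≤ u x) : 0 ≤ simpleInt μ u := by
  simpa [simpleInt_const hμ] using simpleInt_mono h𝒜 hμ hμ0 (isSimple_const h𝒜 0) hu hu0

theorem abs_simpleInt_sub_le (h𝒜 : IsSetAlgebra 𝒜) (hμ : IsFinAdd 𝒜 μ) (hμ0 : IsPos 𝒜 μ)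
    (hu : IsSimple 𝒜 u) (hv : IsSimple 𝒜 v) :
    |simpleInt μ u - simpleInt μ v| ≤ simpleInt μ fun x => |u x - v x| := by
  rw [← simpleInt_sub h𝒜 hμ hu hv, abs_le]
  have habs := hu.map₂ h𝒜 hv fun a b => |a - b|
  constructor
  · have h := simpleInt_mono h𝒜 hμ hμ0 (habs.map h𝒜 (-1 * ·)) (hu.map₂ h𝒜 hv (· - ·))
      fun x => by simpa using neg_abs_le (u x - v x)
    rw [simpleInt_const_mul h𝒜 hμ habs] at h
    linarith
  · exact simpleInt_mono h𝒜 hμ hμ0 (hu.map₂ h𝒜 hv (· - ·)) habs fun x => le_abs_self _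

end SimpleInt

theorem outerOf_le (hμ0 : IsPos 𝒜 μ) {S A : Set Ω} (hA : A ∈ 𝒜) (hSA : S ⊆ A) :
    outerOf 𝒜 μ S ≤ μ A := by
  refine csInf_le ⟨0, ?_⟩ ⟨A, hA, hSA, rfl⟩
  rintro _ ⟨B, hB, -, rfl⟩
  exact hμ0 B hB

theorem outerOf_nonneg (h𝒜 : IsSetAlgebra 𝒜) (hμ0 : IsPos 𝒜 μ) (S : Set Ω) :
    0 ≤ outerOf 𝒜 μ S := by
  refine le_csInf ⟨μ univ, univ, h𝒜.univ_mem, subset_univ S, rfl⟩ ?_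
  rintro _ ⟨A, hA, -, rfl⟩
  exact hμ0 A hA

theorem exists_mem_lt_of_outerOf_lt (h𝒜 : IsSetAlgebra 𝒜) {S : Set Ω} {r : ℝ}
    (h : outerOf 𝒜 μ S < r) : ∃ A ∈ 𝒜, S ⊆ A ∧ μ A < r := by
  obtain ⟨_, ⟨A, hA, hSA, rfl⟩, hAr⟩ :=
    exists_lt_of_csInf_lt (s := {x | ∃ A ∈ 𝒜, S ⊆ A ∧ x = μ A})
      ⟨μ univ, univ, h𝒜.univ_mem, subset_univ S, rfl⟩ h
  exact ⟨A, hA, hSA, hAr⟩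

theorem outerOf_mono (h𝒜 : IsSetAlgebra 𝒜) (hμ0 : IsPos 𝒜 μ) {S T : Set Ω} (h : S ⊆ T) :
    outerOf 𝒜 μ S ≤ outerOf 𝒜 μ T :=
  le_csInf ⟨μ univ, univ, h𝒜.univ_mem, subset_univ T, rfl⟩ fun _ ⟨_, hA, hTA, he⟩ =>
    he ▸ outerOf_le hμ0 hA (h.trans hTA)

theorem outerOf_union_le (h𝒜 : IsSetAlgebra 𝒜) (hμ : IsFinAdd 𝒜 μ) (hμ0 : IsPos 𝒜 μ)
    (S T : Set Ω) : outerOf 𝒜 μ (S ∪ T) ≤ outerOf 𝒜 μ S + outerOf 𝒜 μ T := by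
  refine le_of_forall_pos_lt_add fun ε hε => ?_
  obtain ⟨A, hA, hSA, hAε⟩ :=
    exists_mem_lt_of_outerOf_lt h𝒜 (lt_add_of_pos_right (outerOf 𝒜 μ S) (half_pos hε))
  obtain ⟨B, hB, hTB, hBε⟩ :=
    exists_mem_lt_of_outerOf_lt h𝒜 (lt_add_of_pos_right (outerOf 𝒜 μ T) (half_pos hε))
  calc outerOf 𝒜 μ (S ∪ T) ≤ μ (A ∪ B) :=
        outerOf_le hμ0 (h𝒜.union_mem hA hB) (union_subset_union hSA hTB)
    _ ≤ μ A + μ B := hμ.apply_union_le h𝒜 hμ0 hA hB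
    _ < _ := by linarith

theorem outerOf_empty (h𝒜 : IsSetAlgebra 𝒜) (hμ : IsFinAdd 𝒜 μ) (hμ0 : IsPos 𝒜 μ) :
    outerOf 𝒜 μ ∅ = 0 :=
  le_antisymm (hμ.1 ▸ outerOf_le hμ0 h𝒜.empty_mem subset_rfl) (outerOf_nonneg h𝒜 hμ0 ∅)

theorem tendsto_outerOf_of_subset_union (h𝒜 : IsSetAlgebra 𝒜) (hμ : IsFinAdd 𝒜 μ)
    (hμ0 : IsPos 𝒜 μ) {S T U : ℕ → Set Ω} (hSTU : ∀ n, S n ⊆ T n ∪ U n)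
    (hT : Tendsto (fun n => outerOf 𝒜 μ (T n)) atTop (𝓝 0))
    (hU : Tendsto (fun n => outerOf 𝒜 μ (U n)) atTop (𝓝 0)) :
    Tendsto (fun n => outerOf 𝒜 μ (S n)) atTop (𝓝 0) :=
  squeeze_zero (fun n => outerOf_nonneg h𝒜 hμ0 _)
    (fun n => (outerOf_mono h𝒜 hμ0 (hSTU n)).trans (outerOf_union_le h𝒜 hμ hμ0 _ _))
    (by simpa using hT.add hU)

theorem simpleInt_le_of_superlevel_subset (h𝒜 : IsSetAlgebra 𝒜) (hμ : IsFinAdd 𝒜 μ)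
    (hμ0 : IsPos 𝒜 μ) {u v : Ω → ℝ} (hu : IsSimple 𝒜 u) (hv : IsSimple 𝒜 v) {a M : ℝ}
    (ha : 0 ≤ a) (hvM : ∀ x, v x ≤ M) {A : Set Ω} (hA : A ∈ 𝒜) (hsub : {x | a ≤ u x} ⊆ A) :
    simpleInt μ u ≤ a * μ univ + simpleInt μ (fun x => |u x - v x|) + M * μ A := by
  have hd := hu.map₂ h𝒜 hv fun s t => |s - t|
  have had := (isSimple_const h𝒜 a).map₂ h𝒜 hd (· + ·)
  have hI := isSimple_indicator h𝒜 hA M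
  have hpt : ∀ x, u x ≤ a + |u x - v x| + A.indicator (fun _ => M) x := by
    intro x
    by_cases hx : x ∈ A
    · rw [indicator_of_mem hx]
      linarith [le_abs_self (u x - v x), hvM x, abs_nonneg (u x - v x)]
    · rw [indicator_of_notMem hx]
      linarith [not_le.1 fun h : a ≤ u x => hx (hsub h), abs_nonneg (u x - v x)]
  calc simpleInt μ u ≤ simpleInt μ fun x => a + |u x - v x| + A.indicator (fun _ => M) x :=
        simpleInt_mono h𝒜 hμ hμ0 hu (had.map₂ h𝒜 hI (· + ·)) hpt
    _ = _ := by
      rw [simpleInt_add h𝒜 hμ had hI, simpleInt_add h𝒜 hμ (isSimple_const h𝒜 a) hd,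
        simpleInt_const hμ, simpleInt_indicator hμ]

theorem approxSeq_const (h𝒜 : IsSetAlgebra 𝒜) (hμ : IsFinAdd 𝒜 μ) (hμ0 : IsPos 𝒜 μ)
    {u : Ω → ℝ} (hu : IsSimple 𝒜 u) : ApproxSeq 𝒜 μ u fun _ => u := by
  refine ⟨fun _ => hu, fun ε hε => ⟨0, fun _ _ _ _ => ?_⟩, fun ε hε => ?_⟩
  · simpa [simpleInt_const hμ] using hε
  · simp [not_le.2 hε, outerOf_empty h𝒜 hμ hμ0]

namespace ApproxSeq

variable {F G : Ω → ℝ} {g h : ℕ → Ω → ℝ}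

theorem map₂ (h𝒜 : IsSetAlgebra 𝒜) (hμ : IsFinAdd 𝒜 μ) (hμ0 : IsPos 𝒜 μ)
    (hg : ApproxSeq 𝒜 μ F g) (hh : ApproxSeq 𝒜 μ G h) (op : ℝ → ℝ → ℝ) {K : ℝ} (hK : 0 ≤ K)
    (hop : ∀ a b a' b', |op a b - op a' b'| ≤ K * (|a - a'| + |b - b'|)) :
    ApproxSeq 𝒜 μ (fun x => op (F x) (G x)) fun n x => op (g n x) (h n x) := by
  have hsmall : ∀ ε > 0, K * (2 * (ε / (2 * (K + 1)))) < ε := fun ε hε => by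
    calc K * (2 * (ε / (2 * (K + 1)))) < (K + 1) * (2 * (ε / (2 * (K + 1)))) := by
          gcongr; linarith
      _ = ε := by field_simp
  refine ⟨fun n => (hg.1 n).map₂ h𝒜 (hh.1 n) op, fun ε hε => ?_, fun ε hε => ?_⟩
  · obtain ⟨N₁, hN₁⟩ := hg.2.1 (ε / (2 * (K + 1))) (by positivity)
    obtain ⟨N₂, hN₂⟩ := hh.2.1 (ε / (2 * (K + 1))) (by positivity)
    refine ⟨max N₁ N₂, fun p hp q hq => ?_⟩
    have hdg := (hg.1 p).map₂ h𝒜 (hg.1 q) fun a b => |a - b|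
    have hdh := (hh.1 p).map₂ h𝒜 (hh.1 q) fun a b => |a - b|
    have hsum := hdg.map₂ h𝒜 hdh (· + ·)
    calc simpleInt μ (fun x => |op (g p x) (h p x) - op (g q x) (h q x)|)
        ≤ simpleInt μ fun x => K * (|g p x - g q x| + |h p x - h q x|) :=
          simpleInt_mono h𝒜 hμ hμ0 (((hg.1 p).map₂ h𝒜 (hh.1 p) op).map₂ h𝒜
            ((hg.1 q).map₂ h𝒜 (hh.1 q) op) fun a b => |a - b|) (hsum.map h𝒜 (K * ·))
            fun x => hop _ _ _ _
      _ = K * (simpleInt μ (fun x => |g p x - g q x|) + simpleInt μ fun x => |h p x - h q x|) := by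
          rw [simpleInt_const_mul h𝒜 hμ hsum, simpleInt_add h𝒜 hμ hdg hdh]
      _ ≤ K * (2 * (ε / (2 * (K + 1)))) := by
          have := hN₁ p (le_of_max_le_left hp) q (le_of_max_le_left hq)
          have := hN₂ p (le_of_max_le_right hp) q (le_of_max_le_right hq)
          gcongr
          linarith
      _ < ε := hsmall ε hε
  · refine tendsto_outerOf_of_subset_union h𝒜 hμ hμ0 (fun n x hx => ?_)
      (hg.2.2 (ε / (2 * (K + 1))) (by positivity)) (hh.2.2 (ε / (2 * (K + 1))) (by positivity))
    by_contra hxn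
    simp only [mem_union, mem_ofPred_eq, not_or, not_le] at hx hxn
    have := hop (g n x) (h n x) (F x) (G x)
    have : K * (|g n x - F x| + |h n x - G x|) ≤ K * (2 * (ε / (2 * (K + 1)))) := by
      gcongr
      linarith
    linarith [hsmall ε hε]

theorem sub (h𝒜 : IsSetAlgebra 𝒜) (hμ : IsFinAdd 𝒜 μ) (hμ0 : IsPos 𝒜 μ)
    (hg : ApproxSeq 𝒜 μ F g) (hh : ApproxSeq 𝒜 μ G h) :
    ApproxSeq 𝒜 μ (fun x => F x - G x) fun n x => g n x - h n x :=
  hg.map₂ h𝒜 hμ hμ0 hh (· - ·) zero_le_one fun a b a' b' => by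
    rw [one_mul, show a - b - (a' - b') = (a - a') - (b - b') by ring]
    exact abs_sub _ _

theorem const_mul (h𝒜 : IsSetAlgebra 𝒜) (hμ : IsFinAdd 𝒜 μ) (hμ0 : IsPos 𝒜 μ)
    (hg : ApproxSeq 𝒜 μ F g) (c : ℝ) :
    ApproxSeq 𝒜 μ (fun x => c * F x) fun n x => c * g n x :=
  hg.map₂ h𝒜 hμ hμ0 hg (fun a _ => c * a) (abs_nonneg c) fun a b a' b' => by
    rw [← mul_sub, abs_mul]
    gcongr
    linarith [abs_nonneg (b - b')]

theorem abs (h𝒜 : IsSetAlgebra 𝒜) (hμ : IsFinAdd 𝒜 μ) (hμ0 : IsPos 𝒜 μ)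
    (hg : ApproxSeq 𝒜 μ F g) : ApproxSeq 𝒜 μ (fun x => |F x|) fun n x => |g n x| :=
  hg.map₂ h𝒜 hμ hμ0 hg (fun a _ => |a|) zero_le_one fun a b a' b' => by
    linarith [abs_abs_sub_abs_le_abs_sub a a', abs_nonneg (b - b')]

theorem exists_tendsto (h𝒜 : IsSetAlgebra 𝒜) (hμ : IsFinAdd 𝒜 μ) (hμ0 : IsPos 𝒜 μ)
    (hg : ApproxSeq 𝒜 μ F g) : ∃ I, Tendsto (fun n => simpleInt μ (g n)) atTop (𝓝 I) :=
  cauchySeq_tendsto_of_complete <| Metric.cauchySeq_iff.2 fun ε hε =>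
    let ⟨N, hN⟩ := hg.2.1 ε hε
    ⟨N, fun p hp q hq =>
      (abs_simpleInt_sub_le h𝒜 hμ hμ0 (hg.1 p) (hg.1 q)).trans_lt (hN p hp q hq)⟩

theorem le_zero_of_tendsto (h𝒜 : IsSetAlgebra 𝒜) (hμ : IsFinAdd 𝒜 μ) (hμ0 : IsPos 𝒜 μ)
    (hg : ApproxSeq 𝒜 μ F g) (hF : ∀ x, F x ≤ 0) {I : ℝ}
    (hI : Tendsto (fun n => simpleInt μ (g n)) atTop (𝓝 I)) : I ≤ 0 := by
  refine le_of_forall_pos_le_add fun ε hε => zero_add ε ▸ ?_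
  obtain ⟨N, hN⟩ := hg.2.1 (ε / 3) (by positivity)
  obtain ⟨M, hM, hgM⟩ := (hg.1 N).exists_le
  have hT := hμ0 univ h𝒜.univ_mem
  set δ := ε / (3 * (μ univ + 1))
  have hδ : 0 < δ := by positivity
  have hδT : δ * μ univ ≤ ε / 3 := by
    rw [div_mul_eq_mul_div, div_le_div_iff₀ (by positivity) (by norm_num)]
    nlinarith
  have hsmall := (hg.2.2 δ hδ).eventually (gt_mem_nhds (by positivity : 0 < ε / (3 * M)))
  refine le_of_tendsto hI (((eventually_ge_atTop N).and hsmall).mono fun n ⟨hnN, hn⟩ => ?_)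
  obtain ⟨A, hA, hsub, hμA⟩ := exists_mem_lt_of_outerOf_lt h𝒜 hn
  have hbound := simpleInt_le_of_superlevel_subset h𝒜 hμ hμ0 (hg.1 n) (hg.1 N) hδ.le hgM hA
    fun x (hx : δ ≤ g n x) => hsub (show δ ≤ |g n x - F x| by linarith [hF x, le_abs_self (g n x - F x)])
  have hMA : M * μ A < ε / 3 := by
    rw [lt_div_iff₀ (by positivity : (0 : ℝ) < 3 * M)] at hμA
    linarith
  linarith [hN n hnN N le_rfl]

theorem limit_le (h𝒜 : IsSetAlgebra 𝒜) (hμ : IsFinAdd 𝒜 μ) (hμ0 : IsPos 𝒜 μ)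
    (hg : ApproxSeq 𝒜 μ F g) (hh : ApproxSeq 𝒜 μ G h) (hGF : ∀ x, G x ≤ F x) {I J : ℝ}
    (hI : Tendsto (fun n => simpleInt μ (g n)) atTop (𝓝 I))
    (hJ : Tendsto (fun n => simpleInt μ (h n)) atTop (𝓝 J)) : J ≤ I := by
  have hdiff : Tendsto (fun n => simpleInt μ fun x => h n x - g n x) atTop (𝓝 (J - I)) := by
    simpa only [simpleInt_sub h𝒜 hμ (hh.1 _) (hg.1 _)] using hJ.sub hI
  linarith [(hh.sub h𝒜 hμ hμ0 hg).le_zero_of_tendsto h𝒜 hμ hμ0 (fun x => sub_nonpos.2 (hGF x))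
    hdiff]

theorem tendsto_dsInt (h𝒜 : IsSetAlgebra 𝒜) (hμ : IsFinAdd 𝒜 μ) (hμ0 : IsPos 𝒜 μ)
    (hg : ApproxSeq 𝒜 μ F g) :
    Tendsto (fun n => simpleInt μ (g n)) atTop (𝓝 (dsInt 𝒜 μ F)) := by
  obtain ⟨I, hI⟩ := hg.exists_tendsto h𝒜 hμ hμ0
  have hlimits : {I | ∃ g, ApproxSeq 𝒜 μ F g ∧
      Tendsto (fun n => simpleInt μ (g n)) atTop (𝓝 I)} = {I} :=
    eq_singleton_iff_unique_mem.2 ⟨⟨g, hg, hI⟩, fun J ⟨g', hg', hJ⟩ =>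
      le_antisymm (hg.limit_le h𝒜 hμ hμ0 hg' (fun _ => le_rfl) hI hJ)
        (hg'.limit_le h𝒜 hμ hμ0 hg (fun _ => le_rfl) hJ hI)⟩
  rwa [dsInt, hlimits, csInf_singleton]

end ApproxSeq

section dsInt

variable {F G : Ω → ℝ}

theorem MemL1.sub (h𝒜 : IsSetAlgebra 𝒜) (hμ : IsFinAdd 𝒜 μ) (hμ0 : IsPos 𝒜 μ)
    (hF : MemL1 𝒜 μ F) (hG : MemL1 𝒜 μ G) : MemL1 𝒜 μ fun x => F x - G x :=
  let ⟨_, hg⟩ := hF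
  let ⟨_, hh⟩ := hG
  ⟨_, hg.sub h𝒜 hμ hμ0 hh⟩

theorem MemL1.const_mul (h𝒜 : IsSetAlgebra 𝒜) (hμ : IsFinAdd 𝒜 μ) (hμ0 : IsPos 𝒜 μ)
    (hF : MemL1 𝒜 μ F) (c : ℝ) : MemL1 𝒜 μ fun x => c * F x :=
  let ⟨_, hg⟩ := hF
  ⟨_, hg.const_mul h𝒜 hμ hμ0 c⟩

theorem memL1_of_isSimple (h𝒜 : IsSetAlgebra 𝒜) (hμ : IsFinAdd 𝒜 μ) (hμ0 : IsPos 𝒜 μ)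
    {u : Ω → ℝ} (hu : IsSimple 𝒜 u) : MemL1 𝒜 μ u :=
  ⟨_, approxSeq_const h𝒜 hμ hμ0 hu⟩

theorem dsInt_of_isSimple (h𝒜 : IsSetAlgebra 𝒜) (hμ : IsFinAdd 𝒜 μ) (hμ0 : IsPos 𝒜 μ)
    {u : Ω → ℝ} (hu : IsSimple 𝒜 u) : dsInt 𝒜 μ u = simpleInt μ u :=
  tendsto_nhds_unique ((approxSeq_const h𝒜 hμ hμ0 hu).tendsto_dsInt h𝒜 hμ hμ0)
    tendsto_const_nhds

theorem dsInt_sub (h𝒜 : IsSetAlgebra 𝒜) (hμ : IsFinAdd 𝒜 μ) (hμ0 : IsPos 𝒜 μ)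
    (hF : MemL1 𝒜 μ F) (hG : MemL1 𝒜 μ G) :
    dsInt 𝒜 μ (fun x => F x - G x) = dsInt 𝒜 μ F - dsInt 𝒜 μ G := by
  obtain ⟨g, hg⟩ := hF
  obtain ⟨h, hh⟩ := hG
  refine tendsto_nhds_unique ((hg.sub h𝒜 hμ hμ0 hh).tendsto_dsInt h𝒜 hμ hμ0) ?_
  simpa only [simpleInt_sub h𝒜 hμ (hg.1 _) (hh.1 _)] using
    (hg.tendsto_dsInt h𝒜 hμ hμ0).sub (hh.tendsto_dsInt h𝒜 hμ hμ0)

theorem dsInt_const_mul (h𝒜 : IsSetAlgebra 𝒜) (hμ : IsFinAdd 𝒜 μ) (hμ0 : IsPos 𝒜 μ)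
    (hF : MemL1 𝒜 μ F) (c : ℝ) : dsInt 𝒜 μ (fun x => c * F x) = c * dsInt 𝒜 μ F := by
  obtain ⟨g, hg⟩ := hF
  refine tendsto_nhds_unique ((hg.const_mul h𝒜 hμ hμ0 c).tendsto_dsInt h𝒜 hμ hμ0) ?_
  simpa only [simpleInt_const_mul h𝒜 hμ (hg.1 _)] using
    (hg.tendsto_dsInt h𝒜 hμ hμ0).const_mul c

theorem dsInt_mono (h𝒜 : IsSetAlgebra 𝒜) (hμ : IsFinAdd 𝒜 μ) (hμ0 : IsPos 𝒜 μ)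
    (hF : MemL1 𝒜 μ F) (hG : MemL1 𝒜 μ G) (hGF : ∀ x, G x ≤ F x) :
    dsInt 𝒜 μ G ≤ dsInt 𝒜 μ F :=
  let ⟨_, hg⟩ := hF
  let ⟨_, hh⟩ := hG
  hg.limit_le h𝒜 hμ hμ0 hh hGF (hg.tendsto_dsInt h𝒜 hμ hμ0) (hh.tendsto_dsInt h𝒜 hμ hμ0)

theorem mul_le_dsInt_of_forall_le (h𝒜 : IsSetAlgebra 𝒜) (hμ : IsFinAdd 𝒜 μ)
    (hμ0 : IsPos 𝒜 μ) (hF : MemL1 𝒜 μ F) (hF0 : ∀ x, 0 ≤ F x) {B : Set Ω} (hB : B ∈ 𝒜)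
    {δ : ℝ} (hδ : ∀ x ∈ B, δ ≤ F x) : δ * μ B ≤ dsInt 𝒜 μ F := by
  have hu := isSimple_indicator h𝒜 hB δ
  rw [← simpleInt_indicator hμ, ← dsInt_of_isSimple h𝒜 hμ hμ0 hu]
  refine dsInt_mono h𝒜 hμ hμ0 hF (memL1_of_isSimple h𝒜 hμ hμ0 hu) fun x => ?_
  by_cases hx : x ∈ B
  · simpa [hx] using hδ x hx
  · simpa [hx] using hF0 x

end dsInt

section Dominated

variable {c : ℝ} {F : Ω → ℝ}

theorem exists_le_mul_of_ratio_bdd (hμ0 : IsPos 𝒜 μ)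
    (hratio : ∃ c : ℝ, ∀ A ∈ 𝒜, 0 < μ A → ν A ≤ c * μ A)
    (hnull : ∀ A ∈ 𝒜, μ A = 0 → ν A = 0) : ∃ c > 0, ∀ A ∈ 𝒜, ν A ≤ c * μ A := by
  obtain ⟨c, hc⟩ := hratio
  refine ⟨max c 1, by positivity, fun A hA => ?_⟩
  rcases (hμ0 A hA).lt_or_eq with hpos | hzero
  · exact (hc A hA hpos).trans (by gcongr; exact le_max_left _ _)
  · rw [hnull A hA hzero.symm, ← hzero, mul_zero]

theorem simpleInt_le_mul_of_dominated (h𝒜 : IsSetAlgebra 𝒜) (hμ : IsFinAdd 𝒜 μ)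
    (hν : IsFinAdd 𝒜 ν) (hdom : ∀ A ∈ 𝒜, ν A ≤ c * μ A) {u : Ω → ℝ} (hu : IsSimple 𝒜 u)
    (hu0 : ∀ x, 0 ≤ u x) : simpleInt ν u ≤ c * simpleInt μ u := by
  rw [simpleInt_map_eq_sum h𝒜 hν hu fun a => a, simpleInt_map_eq_sum h𝒜 hμ hu fun a => a,
    Finset.mul_sum]
  refine Finset.sum_le_sum fun a ha => ?_
  obtain ⟨x, rfl⟩ := hu.1.mem_toFinset.1 ha
  calc u x * ν (u ⁻¹' {u x}) ≤ u x * (c * μ (u ⁻¹' {u x})) := by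
        gcongr
        · exact hu0 x
        · exact hdom _ (hu.2 _)
    _ = c * (u x * μ (u ⁻¹' {u x})) := by ring

theorem outerOf_le_mul_of_dominated (h𝒜 : IsSetAlgebra 𝒜) (hν0 : IsPos 𝒜 ν) (hc : 0 ≤ c)
    (hdom : ∀ A ∈ 𝒜, ν A ≤ c * μ A) (S : Set Ω) : outerOf 𝒜 ν S ≤ c * outerOf 𝒜 μ S := by
  refine le_of_forall_pos_lt_add fun ε hε => ?_
  obtain ⟨A, hA, hSA, hAε⟩ := exists_mem_lt_of_outerOf_lt h𝒜
    (lt_add_of_pos_right (outerOf 𝒜 μ S) (by positivity : 0 < ε / (c + 1)))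
  calc outerOf 𝒜 ν S ≤ c * μ A := (outerOf_le hν0 hA hSA).trans (hdom A hA)
    _ ≤ c * outerOf 𝒜 μ S + c * (ε / (c + 1)) := by rw [← mul_add]; gcongr
    _ < c * outerOf 𝒜 μ S + (c + 1) * (ε / (c + 1)) := by gcongr; linarith
    _ = c * outerOf 𝒜 μ S + ε := by field_simp

theorem ApproxSeq.of_dominated (h𝒜 : IsSetAlgebra 𝒜) (hμ : IsFinAdd 𝒜 μ)
    (hν : IsFinAdd 𝒜 ν) (hν0 : IsPos 𝒜 ν) (hc : 0 ≤ c) (hdom : ∀ A ∈ 𝒜, ν A ≤ c * μ A)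
    {g : ℕ → Ω → ℝ} (hg : ApproxSeq 𝒜 μ F g) : ApproxSeq 𝒜 ν F g := by
  refine ⟨hg.1, fun ε hε => ?_, fun ε hε => ?_⟩
  · obtain ⟨N, hN⟩ := hg.2.1 (ε / (c + 1)) (by positivity)
    refine ⟨N, fun p hp q hq => ?_⟩
    calc simpleInt ν (fun x => |g p x - g q x|)
        ≤ c * simpleInt μ fun x => |g p x - g q x| :=
          simpleInt_le_mul_of_dominated h𝒜 hμ hν hdom ((hg.1 p).map₂ h𝒜 (hg.1 q) fun a b => |a - b|)
            fun x => abs_nonneg _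
      _ ≤ c * (ε / (c + 1)) := by gcongr; exact (hN p hp q hq).le
      _ < (c + 1) * (ε / (c + 1)) := by gcongr; linarith
      _ = ε := by field_simp
  · exact squeeze_zero (fun n => outerOf_nonneg h𝒜 hν0 _)
      (fun n => outerOf_le_mul_of_dominated h𝒜 hν0 hc hdom _)
      (by simpa using (hg.2.2 ε hε).const_mul c)

theorem MemL1.of_dominated (h𝒜 : IsSetAlgebra 𝒜) (hμ : IsFinAdd 𝒜 μ)
    (hν : IsFinAdd 𝒜 ν) (hν0 : IsPos 𝒜 ν) (hc : 0 ≤ c) (hdom : ∀ A ∈ 𝒜, ν A ≤ c * μ A)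
    (hF : MemL1 𝒜 μ F) : MemL1 𝒜 ν F :=
  let ⟨_, hg⟩ := hF
  ⟨_, hg.of_dominated h𝒜 hμ hν hν0 hc hdom⟩

theorem dsInt_le_mul_dsInt_abs_of_dominated (h𝒜 : IsSetAlgebra 𝒜) (hμ : IsFinAdd 𝒜 μ)
    (hμ0 : IsPos 𝒜 μ) (hν : IsFinAdd 𝒜 ν) (hν0 : IsPos 𝒜 ν) (hc : 0 ≤ c)
    (hdom : ∀ A ∈ 𝒜, ν A ≤ c * μ A) (hF : MemL1 𝒜 μ F) :
    dsInt 𝒜 ν F ≤ c * dsInt 𝒜 μ fun x => |F x| := by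
  obtain ⟨g, hg⟩ := hF
  have habs := hg.abs h𝒜 hμ hμ0
  have habsν := habs.of_dominated h𝒜 hμ hν hν0 hc hdom
  calc dsInt 𝒜 ν F ≤ dsInt 𝒜 ν fun x => |F x| :=
        dsInt_mono h𝒜 hν hν0 ⟨_, habsν⟩ ⟨_, hg.of_dominated h𝒜 hμ hν hν0 hc hdom⟩
          fun x => le_abs_self _
    _ ≤ c * dsInt 𝒜 μ fun x => |F x| :=
        le_of_tendsto_of_tendsto' (habsν.tendsto_dsInt h𝒜 hν hν0)
          ((habs.tendsto_dsInt h𝒜 hμ hμ0).const_mul c) fun n =>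
            simpleInt_le_mul_of_dominated h𝒜 hμ hν hdom ((hg.1 n).map h𝒜 fun a => |a|)
              fun x => abs_nonneg _

end Dominated

theorem exists_mem_measure_pos_le_of_dsInt_pos (h𝒜 : IsSetAlgebra 𝒜) (hμ : IsFinAdd 𝒜 μ)
    (hμ0 : IsPos 𝒜 μ) {F : Ω → ℝ} (hF : MemL1 𝒜 μ F) (hpos : 0 < dsInt 𝒜 μ F) :
    ∃ B ∈ 𝒜, 0 < μ B ∧ ∃ δ > 0, ∀ x ∈ B, δ ≤ F x := by
  obtain ⟨g, hg⟩ := hF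
  set I := dsInt 𝒜 μ F
  have hT := hμ0 univ h𝒜.univ_mem
  set a := I / (4 * (μ univ + 1))
  have ha : 0 < a := by positivity
  have haT : a * μ univ ≤ I / 4 := by
    rw [div_mul_eq_mul_div, div_le_div_iff₀ (by positivity) (by norm_num)]
    nlinarith
  obtain ⟨m, hm⟩ := hg.2.1 (I / 8) (by positivity)
  obtain ⟨M, hM, hgM⟩ := (hg.1 m).exists_le
  have hlarge := (hg.tendsto_dsInt h𝒜 hμ hμ0).eventually (lt_mem_nhds (half_lt_self hpos))
  have hclose := (hg.2.2 (a / 2) (half_pos ha)).eventually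
    (gt_mem_nhds (by positivity : 0 < I / (8 * M)))
  obtain ⟨n, hnm, hn_large, hn_close⟩ :=
    ((eventually_ge_atTop m).and (hlarge.and hclose)).exists
  obtain ⟨A, hA, hsub, hμA⟩ := exists_mem_lt_of_outerOf_lt h𝒜 hn_close
  set S := g n ⁻¹' Ici a
  have hS : S ∈ 𝒜 := (hg.1 n).preimage_mem h𝒜 (Ici a)
  have hSA : S \ A ∈ 𝒜 := h𝒜.sdiff_mem hS hA
  have hbound := simpleInt_le_of_superlevel_subset h𝒜 hμ hμ0 (hg.1 n) (hg.1 m) ha.le hgM hS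
    fun _ hx => hx
  have hsplit : μ S ≤ μ (S \ A) + μ A :=
    (hμ.mono h𝒜 hμ0 hS (h𝒜.union_mem hSA hA) (subset_sdiff_union S A)).trans
      (hμ.apply_union_le h𝒜 hμ0 hSA hA)
  refine ⟨S \ A, hSA, ?_, a / 2, half_pos ha, fun x hx => ?_⟩
  · have hMA : M * μ A < I / 8 := by
      rw [lt_div_iff₀ (by positivity : (0 : ℝ) < 8 * M)] at hμA
      linarith
    have : 0 < M * μ (S \ A) := by nlinarith [hm n hnm m le_rfl]
    exact pos_of_mul_pos_right this hM.le
  · have hgx : a ≤ g n x := hx.1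
    have hclose_x : |g n x - F x| < a / 2 := not_le.1 fun h => hx.2 (hsub h)
    linarith [le_abs_self (g n x - F x)]

theorem yan_iii_i_general {Ω : Type*} (𝒜 : Set (Set Ω)) (hA : IsAlg 𝒜)
    (l : Set Ω → ℝ) (hl : IsFinAdd 𝒜 l) (hpos : IsPos 𝒜 l)
    (K : Set (Ω → ℝ)) (hK1 : ∀ f ∈ K, MemL1 𝒜 l f)
    (P : Set Ω → ℝ) (hP : IsFinAdd 𝒜 P) (hPpos : IsPos 𝒜 P)
    (hb : ∃ c : ℝ, ∀ k ∈ K, dsInt 𝒜 P k ≤ c)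
    (hr : ∃ c : ℝ, ∀ A ∈ 𝒜, 0 < l A → P A ≤ c * l A)
    (heq : ∀ A ∈ 𝒜, (P A = 0 ↔ l A = 0)) :
    ∀ f : Ω → ℝ, MemL1 𝒜 l f → (∀ x, 0 ≤ f x) → 0 < dsInt 𝒜 l f →
      ∃ η > (0:ℝ), ¬ InL1Closure 𝒜 l (ConeDiff 𝒜 K) (fun x => η * f x) := by
  intro f hf hf0 hfl
  have h𝒜 := hA.isSetAlgebra
  obtain ⟨c, hc, hdom⟩ := exists_le_mul_of_ratio_bdd hpos hr fun A hA => (heq A hA).2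
  have toP {F : Ω → ℝ} (hF : MemL1 𝒜 l F) : MemL1 𝒜 P F :=
    hF.of_dominated h𝒜 hl hP hPpos hc.le hdom
  obtain ⟨b, hb⟩ := hb
  obtain ⟨B, hB, hlB, δ, hδ, hfB⟩ := exists_mem_measure_pos_le_of_dsInt_pos h𝒜 hl hpos hf hfl
  have hPB : 0 < P B := (hPpos B hB).lt_of_ne fun h => hlB.ne' ((heq B hB).1 h.symm)
  have hfP := mul_le_dsInt_of_forall_le h𝒜 hP hPpos (toP hf) hf0 hB hfB
  set η := (|b| + 1) / (δ * P B)
  have hη0 : 0 < η := by positivity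
  refine ⟨η, hη0, fun hcl => ?_⟩
  obtain ⟨_, ⟨k, hk, s, hs, hs0, rfl⟩, hdist⟩ := hcl (1 / c) (by positivity)
  have hηf := hf.const_mul h𝒜 hl hpos η
  have hks := (hK1 k hk).sub h𝒜 hl hpos (memL1_of_isSimple h𝒜 hl hpos hs)
  have hlower : 1 ≤ dsInt 𝒜 P fun x => η * f x - (k x - s x) := by
    rw [dsInt_sub h𝒜 hP hPpos (toP hηf) (toP hks), dsInt_const_mul h𝒜 hP hPpos (toP hf),
      dsInt_sub h𝒜 hP hPpos (toP (hK1 k hk)) (memL1_of_isSimple h𝒜 hP hPpos hs),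
      dsInt_of_isSimple h𝒜 hP hPpos hs]
    have hη : η * (δ * P B) = |b| + 1 := div_mul_cancel₀ _ (by positivity)
    linarith [hb k hk, le_abs_self b, simpleInt_nonneg h𝒜 hP hPpos hs hs0,
      mul_le_mul_of_nonneg_left hfP hη0.le]
  have hupper : (dsInt 𝒜 P fun x => η * f x - (k x - s x)) < 1 :=
    calc _ ≤ c * dsInt 𝒜 l fun x => |η * f x - (k x - s x)| :=
          dsInt_le_mul_dsInt_abs_of_dominated h𝒜 hl hpos hP hPpos hc.le hdom
            (hηf.sub h𝒜 hl hpos hks)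
      _ < c * (1 / c) := by gcongr; exact hdist
      _ = 1 := mul_one_div_cancel hc.ne'
  exact hupper.not_ge hlower

/-- Yan, (iii) ⇒ (i). -/
theorem yan_iii_i {Ω : Type*} (𝒜 : Set (Set Ω)) (hA : IsAlg 𝒜)
    (l : Set Ω → ℝ) (hl : IsFinAdd 𝒜 l) (hpos : IsPos 𝒜 l)
    (K : Set (Ω → ℝ)) (hK1 : ∀ f ∈ K, MemL1 𝒜 l f)
    (hconv : ∀ f ∈ K, ∀ g ∈ K, ∀ t : ℝ, 0 ≤ t → t ≤ 1 →
      (fun x => t * f x + (1 - t) * g x) ∈ K)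
    (h0 : (fun _ => (0:ℝ)) ∈ K)
    (P : Set Ω → ℝ) (hP : IsFinAdd 𝒜 P) (hPpos : IsPos 𝒜 P) (hP1 : P Set.univ = 1)
    (hKP : ∀ k ∈ K, MemL1 𝒜 P k)
    (hb : ∃ c : ℝ, ∀ k ∈ K, dsInt 𝒜 P k ≤ c)
    (hr : ∃ c : ℝ, ∀ A ∈ 𝒜, 0 < l A → P A ≤ c * l A)
    (heq : ∀ A ∈ 𝒜, (P A = 0 ↔ l A = 0)) :
    ∀ f : Ω → ℝ, MemL1 𝒜 l f → (∀ x, 0 ≤ f x) → 0 < dsInt 𝒜 l f →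
      ∃ η > (0:ℝ), ¬ InL1Closure 𝒜 l (ConeDiff 𝒜 K) (fun x => η * f x) :=
  yan_iii_i_general 𝒜 hA l hl hpos K hK1 P hP hPpos hb hr heq
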